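/- arXiv:1606.00328 — 2 statements merged into one kernel-verified Lean document; each statement's English description precedes it below -/
import Mathlib

section
/- Let F be a commutative perfect semi-field of characteristic 1 satisfying Assumptions 1 and 2, with F not reduced to {0}. Then r(E) = 1. -/
open scoped Pointwise

/-- A commutative perfect semi-field of characteristic `1`: an abelian group `(F, +, 0)`
together with a commutative, associative, idempotent operation `⊕` over which `+`
distributes, and such that `X ↦ n • X` is surjective for every `n > 0`. -/
class CharOneSemifield (F : Type*) extends AddCommGroup F where
  oplus : F → F → F
  oplus_comm : ∀ X Y : F, oplus X Y = oplus Y X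
  oplus_assoc : ∀ X Y Z : F, oplus (oplus X Y) Z = oplus X (oplus Y Z)
  oplus_idem : ∀ X : F, oplus X X = X
  add_oplus : ∀ X Y Z : F, X + oplus Y Z = oplus (X + Y) (X + Z)
  perfect : ∀ n : ℕ, 0 < n → Function.Surjective (fun X : F => n • X)

namespace CharOneSemifield

variable {F : Type*} [CharOneSemifield F]

/-- The canonical partial order on `F`: `X ≤ Y` iff `X ⊕ Y = Y`. -/
def cle (X Y : F) : Prop := oplus X Y = Y

/-- Assumption 1: every element is dominated by (rational multiples of) `E`:
for every `X` there are naturals `a, b` with `b > 0` and `-(a • E) ≤ b • X ≤ a • E`. -/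
def Assumption1 (E : F) : Prop :=
  ∀ X : F, ∃ a b : ℕ, 0 < b ∧ cle (-(a • E)) (b • X) ∧ cle (b • X) (a • E)

/-- `rval E X` is the infimum in `ℝ` of the ratios `a / b` over the pairs of naturals
`(a, b)` with `b > 0` and `-(a • E) ≤ b • X ≤ a • E`. -/
noncomputable def rval (E X : F) : ℝ :=
  sInf {t : ℝ | ∃ a b : ℕ, 0 < b ∧ t = (a : ℝ) / (b : ℝ) ∧
    cle (-(a • E)) (b • X) ∧ cle (b • X) (a • E)}

/-- Assumption 2: `r(X) = 0` implies `X = 0`. -/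
def Assumption2 (E : F) : Prop := ∀ X : F, rval E X = 0 → X = 0

/-- `F` is Banach if it is (sequentially) complete for the metric `(X, Y) ↦ r (X - Y)`. -/
def IsBanach (E : F) : Prop :=
  ∀ u : ℕ → F,
    (∀ ε : ℝ, 0 < ε → ∃ N : ℕ, ∀ m ≥ N, ∀ n ≥ N, rval E (u m - u n) < ε) →
    ∃ L : F, ∀ ε : ℝ, 0 < ε → ∃ N : ℕ, ∀ n ≥ N, rval E (u n - L) < ε

/-- A character of `F`: a map `φ : F → ℝ`, not identically zero, turning `⊕` into `max`
and `+` into `+`. -/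
def IsChar (φ : F → ℝ) : Prop :=
  (∃ X : F, φ X ≠ 0) ∧
  (∀ X Y : F, φ (oplus X Y) = max (φ X) (φ Y)) ∧
  (∀ X Y : F, φ (X + Y) = φ X + φ Y)

/-- The spectrum `S_E(F)`: the set of characters normalized by `φ E = 1`, viewed as a
subset of the product space `F → ℝ` (topology of pointwise convergence). -/
def specE (E : F) : Set (F → ℝ) := {φ : F → ℝ | IsChar φ ∧ φ E = 1}

/-- A congruence on `F`: an equivalence relation compatible with `-`, `+` and `⊕`. -/
structure IsCongruence (r : F → F → Prop) : Prop where
  equiv : Equivalence r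
  neg_compat : ∀ {X Y : F}, r X Y → r (-X) (-Y)
  add_compat : ∀ {X Y : F} (Z : F), r X Y → r (X + Z) (Y + Z)
  oplus_compat : ∀ {X Y : F} (Z : F), r X Y → r (oplus X Z) (oplus Y Z)

/-- A maximal congruence: a non-trivial congruence such that every coarser congruence is
either equal to it or trivial. -/
def IsMaximalCongruence (rel : F → F → Prop) : Prop :=
  IsCongruence rel ∧ (¬ ∀ X Y : F, rel X Y) ∧
  ∀ s : F → F → Prop, IsCongruence s → (∀ X Y : F, rel X Y → s X Y) →
    (∀ X Y : F, s X Y ↔ rel X Y) ∨ (∀ X Y : F, s X Y)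

end CharOneSemifield

open CharOneSemifield

/-! `E` is nonzero, since otherwise Assumption 1 makes every element torsion, which Assumption 2
forbids. Applied to `X = E`, Assumption 1 gives `0 ≤ m • E` for some `m > 0`, so the pair `(m, m)`
shows `r(E) ≤ 1`. Conversely a pair `(a, b)` with `a < b` and `-(a • E) ≤ b • E ≤ a • E` would give
`0 ≤ (a + b) • E` and `(b - a) • E ≤ 0`, hence `((b - a) * (a + b)) • E = 0` and `E = 0`. -/

namespace CharOneSemifield

variable {F : Type*} [CharOneSemifield F]

theorem cle_refl (X : F) : cle X X := oplus_idem X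

theorem cle_trans {X Y Z : F} (hXY : cle X Y) (hYZ : cle Y Z) : cle X Z := by
  unfold cle at *
  rw [← hYZ, ← oplus_assoc, hXY]

theorem cle_antisymm {X Y : F} (hXY : cle X Y) (hYX : cle Y X) : X = Y := by
  unfold cle at *
  rw [← hYX, oplus_comm Y X, hXY]

theorem cle_add_right {X Y : F} (Z : F) (h : cle X Y) : cle (X + Z) (Y + Z) := by
  unfold cle at *
  rw [add_comm X Z, add_comm Y Z, ← add_oplus, h]

theorem cle_iff_cle_zero_sub {X Y : F} : cle X Y ↔ cle 0 (Y - X) := by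
  constructor
  · intro h
    simpa [sub_eq_add_neg] using cle_add_right (-X) h
  · intro h
    simpa using cle_add_right X h

theorem cle_zero_add {X Y : F} (hX : cle 0 X) (hY : cle 0 Y) : cle 0 (X + Y) :=
  cle_trans hY (by simpa using cle_add_right Y hX)

theorem cle_zero_nsmul {X : F} (hX : cle 0 X) (n : ℕ) : cle 0 (n • X) := by
  induction n with
  | zero => simpa using cle_refl (0 : F)
  | succ k ih => simpa [succ_nsmul] using cle_zero_add ih hX

theorem eq_zero_of_cle_zero_of_cle_zero_neg {X : F} (hX : cle 0 X) (hnX : cle 0 (-X)) :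
    X = 0 :=
  cle_antisymm (cle_iff_cle_zero_sub.mpr (by simpa using hnX)) hX

def ratios (E X : F) : Set ℝ :=
  {t : ℝ | ∃ a b : ℕ, 0 < b ∧ t = (a : ℝ) / (b : ℝ) ∧
    cle (-(a • E)) (b • X) ∧ cle (b • X) (a • E)}

theorem rval_eq_sInf_ratios (E X : F) : rval E X = sInf (ratios E X) := rfl

theorem nonneg_of_mem_ratios {E X : F} {t : ℝ} (ht : t ∈ ratios E X) : 0 ≤ t := by
  obtain ⟨a, b, -, rfl, -, -⟩ := ht
  positivity

theorem rval_eq_zero_of_nsmul_eq_zero {E X : F} {b : ℕ} (hb : 0 < b) (h : b • X = 0) :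
    rval E X = 0 := by
  have hzero : (0 : ℝ) ∈ ratios E X :=
    ⟨0, b, hb, by simp, by simpa [h] using cle_refl (0 : F), by simpa [h] using cle_refl (0 : F)⟩
  exact IsLeast.csInf_eq ⟨hzero, fun _ => nonneg_of_mem_ratios⟩

theorem Assumption2.eq_zero_of_nsmul_eq_zero {E X : F} (h2 : Assumption2 E) {b : ℕ}
    (hb : 0 < b) (h : b • X = 0) : X = 0 :=
  h2 X (rval_eq_zero_of_nsmul_eq_zero hb h)

theorem Assumption1.ne_zero {E : F} (h1 : Assumption1 E) (h2 : Assumption2 E)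
    (hnt : ∃ X : F, X ≠ 0) : E ≠ 0 := by
  rintro rfl
  obtain ⟨X, hX⟩ := hnt
  obtain ⟨a, b, hb, hlow, hup⟩ := h1 X
  simp only [smul_zero, neg_zero] at hlow hup
  exact hX (h2.eq_zero_of_nsmul_eq_zero hb (cle_antisymm hup hlow))

theorem cle_zero_add_nsmul_of_neg_cle {E : F} {a b : ℕ} (h : cle (-(a • E)) (b • E)) :
    cle 0 ((a + b) • E) := by
  simpa [add_smul, add_comm] using cle_iff_cle_zero_sub.mp h

theorem Assumption1.exists_cle_zero_nsmul {E : F} (h1 : Assumption1 E) :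
    ∃ m : ℕ, 0 < m ∧ cle 0 (m • E) := by
  obtain ⟨a, b, hb, hlow, -⟩ := h1 E
  exact ⟨a + b, by omega, cle_zero_add_nsmul_of_neg_cle hlow⟩

theorem one_mem_ratios_self {E : F} {m : ℕ} (hm : 0 < m) (hE : cle 0 (m • E)) :
    (1 : ℝ) ∈ ratios E E := by
  refine ⟨m, m, hm, (div_self (by positivity)).symm, ?_, cle_refl _⟩
  exact cle_iff_cle_zero_sub.mpr (by simpa using cle_zero_add hE hE)

theorem nsmul_eq_zero_of_neg_cle_of_cle {E : F} {a b : ℕ} (hab : a < b)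
    (hlow : cle (-(a • E)) (b • E)) (hup : cle (b • E) (a • E)) :
    ((b - a) * (a + b)) • E = 0 := by
  have hsum : cle 0 ((a + b) • E) := cle_zero_add_nsmul_of_neg_cle hlow
  have hdiff : cle 0 (-((b - a) • E)) := by
    simpa [sub_nsmul E hab.le, sub_eq_add_neg] using cle_iff_cle_zero_sub.mp hup
  refine eq_zero_of_cle_zero_of_cle_zero_neg ?_ ?_
  · simpa [smul_smul] using cle_zero_nsmul hsum (b - a)
  · simpa [smul_smul, mul_comm] using cle_zero_nsmul hdiff (a + b)

theorem one_le_of_mem_ratios_self {E : F} (h2 : Assumption2 E) (hE : E ≠ 0) {t : ℝ}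
    (ht : t ∈ ratios E E) : 1 ≤ t := by
  obtain ⟨a, b, hb, rfl, hlow, hup⟩ := ht
  rw [one_le_div (by positivity)]
  by_contra! hab
  have hab : a < b := by exact_mod_cast hab
  exact hE (h2.eq_zero_of_nsmul_eq_zero (Nat.mul_pos (by omega) (by omega))
    (nsmul_eq_zero_of_neg_cle_of_cle hab hlow hup))

end CharOneSemifield

/-- if `F ≠ {0}` satisfies Assumptions 1 and 2 then `r(E) = 1`. -/
theorem stmt5 {F : Type*} [CharOneSemifield F] (E : F)
    (h1 : Assumption1 E) (h2 : Assumption2 E) (hnt : ∃ X : F, X ≠ 0) :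
    rval E E = 1 := by
  have hE : E ≠ 0 := h1.ne_zero h2 hnt
  obtain ⟨m, hm, hmE⟩ := h1.exists_cle_zero_nsmul
  rw [rval_eq_sInf_ratios]
  exact IsLeast.csInf_eq ⟨one_mem_ratios_self hm hmE, fun _ => one_le_of_mem_ratios_self h2 hE⟩
end

section
/- Let F be a commutative perfect semi-field of characteristic 1 satisfying Assumptions 1 and 2 which is Banach. Then for every X ∈ F one has r(X) = max(r(0 ⊕ X), r(0 ⊕ (−X))). -/
open scoped Pointwise

/-!
`⊕` is the join of a semilattice order on `F` that is invariant under translations. In such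
an ordered group `0 ≤ n • a` forces `0 ≤ a`, because `(m + 1) • (a ⊔ 0) = (a + m • (a ⊔ 0)) ⊔ 0`;
consequently `n • (a ⊔ 0) = n • a ⊔ 0`. Hence every pair `(a, b)` with `-(a • E) ≤ b • X ≤ a • E`
also works for `0 ⊔ X` and `0 ⊔ -X`, while pairs working for both parts (brought to a common
denominator) work for `X`, since `X ≤ 0 ⊔ X` and `-X ≤ 0 ⊔ -X`. Assumption 1 applied to `E`
itself gives `0 ≤ E`, which is what makes enlarging `a` harmless.
-/

section SemilatticeSup

variable {α : Type*} [SemilatticeSup α] [AddCommGroup α] [AddLeftMono α]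

theorem add_sup_left (c a b : α) : c + a ⊔ b = (c + a) ⊔ (c + b) :=
  (OrderIso.addLeft c).map_sup a b

theorem succ_nsmul_sup_zero (a : α) (k : ℕ) :
    (k + 1) • (a ⊔ 0) = (a + k • (a ⊔ 0)) ⊔ 0 := by
  induction k with
  | zero => simp
  | succ k ih =>
    have hle : a ≤ a + (k + 1) • (a ⊔ 0) :=
      le_add_of_nonneg_right (nsmul_nonneg le_sup_right _)
    calc (k + 1 + 1) • (a ⊔ 0) = (a ⊔ 0) + (a + k • (a ⊔ 0)) ⊔ 0 := by
          rw [succ_nsmul' _ (k + 1), ih]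
      _ = (a ⊔ 0) ⊔ (a + (k + 1) • (a ⊔ 0)) := by
          rw [add_sup_left, add_zero, succ_nsmul' _ k, add_left_comm, sup_comm]
      _ = (a + (k + 1) • (a ⊔ 0)) ⊔ 0 := by
          rw [sup_right_comm, sup_of_le_right hle]

theorem nonneg_of_nsmul_nonneg {a : α} {n : ℕ} (hn : n ≠ 0) (h : 0 ≤ n • a) : 0 ≤ a := by
  obtain ⟨m, rfl⟩ := Nat.exists_eq_succ_of_ne_zero hn
  have hle : (m + 1) • a ≤ a + m • (a ⊔ 0) := by
    rw [succ_nsmul']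
    exact add_le_add_right (nsmul_le_nsmul_right le_sup_left m) a
  have hsup : (m + 1) • (a ⊔ 0) = a + m • (a ⊔ 0) := by
    rw [succ_nsmul_sup_zero, sup_eq_left.2 (h.trans hle)]
  rw [succ_nsmul', add_left_inj] at hsup
  exact hsup ▸ le_sup_right

theorem le_of_nsmul_le_nsmul {a b : α} {n : ℕ} (hn : n ≠ 0) (h : n • a ≤ n • b) : a ≤ b :=
  sub_nonneg.1 <| nonneg_of_nsmul_nonneg hn <| by rwa [nsmul_sub, sub_nonneg]

theorem le_succ_nsmul_sup_zero (a : α) (n : ℕ) : a ≤ (n + 1) • a ⊔ 0 := by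
  refine le_of_nsmul_le_nsmul n.succ_ne_zero ?_
  calc (n + 1) • a ≤ (n + 1) • a ⊔ 0 := le_sup_left
    _ = 1 • ((n + 1) • a ⊔ 0) := (one_nsmul _).symm
    _ ≤ (n + 1) • ((n + 1) • a ⊔ 0) := nsmul_le_nsmul_left le_sup_right le_add_self

theorem nsmul_sup_zero (a : α) (n : ℕ) : n • (a ⊔ 0) = n • a ⊔ 0 := by
  induction n with
  | zero => simp
  | succ n ih =>
    rw [succ_nsmul_sup_zero, ih, add_sup_left, add_zero, ← succ_nsmul', sup_right_comm,
      sup_of_le_left (le_succ_nsmul_sup_zero a n)]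

end SemilatticeSup

theorem natCast_max_div_mul (a₁ a₂ : ℕ) {b₁ b₂ : ℕ} (hb₁ : 0 < b₁) (hb₂ : 0 < b₂) :
    ((max (b₂ * a₁) (b₁ * a₂) : ℕ) : ℝ) / (b₁ * b₂ : ℕ) = max ((a₁ : ℝ) / b₁) (a₂ / b₂) := by
  push_cast
  rw [← max_div_div_right (by positivity)]
  congr 1 <;> field_simp

namespace CharOneSemifield

variable {F : Type*} [CharOneSemifield F]

instance : Max F := ⟨oplus⟩

/-- The canonical order: `X ≤ Y` unfolds to `cle X Y`. -/
instance : SemilatticeSup F := SemilatticeSup.mk' oplus_comm oplus_assoc oplus_idem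

instance : IsOrderedAddMonoid F where
  add_le_add_left a b (h : oplus a b = b) c := by
    rw [add_comm a, add_comm b]
    exact (add_oplus c a b).symm.trans (congrArg (c + ·) h)

theorem nonneg_of_assumption1 {E : F} (h1 : Assumption1 E) : 0 ≤ E := by
  obtain ⟨a, b, hb, hlow, -⟩ := h1 E
  refine nonneg_of_nsmul_nonneg (n := a + b) (by omega) ?_
  rw [add_nsmul]
  exact neg_le_iff_add_nonneg'.1 hlow

def IsRatioBound (E Y : F) (a b : ℕ) : Prop := -(a • E) ≤ b • Y ∧ b • Y ≤ a • E

/-- `rval E Y = sInf (ratioSet E Y)` holds by `rfl`. -/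
def ratioSet (E Y : F) : Set ℝ :=
  {t | ∃ a b : ℕ, 0 < b ∧ t = (a : ℝ) / b ∧ IsRatioBound E Y a b}

variable {E Y Z : F} {a a' b : ℕ}

theorem bddBelow_ratioSet : BddBelow (ratioSet E Y) :=
  ⟨0, by rintro _ ⟨a, b, -, rfl, -⟩; positivity⟩

theorem ratioSet_nonempty (h1 : Assumption1 E) : (ratioSet E Y).Nonempty := by
  obtain ⟨a, b, hb, h⟩ := h1 Y
  exact ⟨_, a, b, hb, rfl, h⟩

theorem rval_le (hb : 0 < b) (h : IsRatioBound E Y a b) : rval E Y ≤ a / b :=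
  csInf_le bddBelow_ratioSet ⟨a, b, hb, rfl, h⟩

theorem rval_le_rval (h1 : Assumption1 E)
    (h : ∀ a b, IsRatioBound E Y a b → IsRatioBound E Z a b) : rval E Z ≤ rval E Y :=
  csInf_le_csInf bddBelow_ratioSet (ratioSet_nonempty h1) <| by
    rintro _ ⟨a, b, hb, rfl, hY⟩
    exact ⟨a, b, hb, rfl, h a b hY⟩

theorem exists_isRatioBound_of_rval_lt (h1 : Assumption1 E) {c : ℝ} (h : rval E Y < c) :
    ∃ a b : ℕ, 0 < b ∧ (a : ℝ) / b < c ∧ IsRatioBound E Y a b := by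
  obtain ⟨_, ⟨a, b, hb, rfl, hY⟩, hlt⟩ := exists_lt_of_csInf_lt (ratioSet_nonempty h1) h
  exact ⟨a, b, hb, hlt, hY⟩

namespace IsRatioBound

theorem neg (h : IsRatioBound E Y a b) : IsRatioBound E (-Y) a b := by
  rw [IsRatioBound, smul_neg, neg_le_neg_iff, neg_le]
  exact h.symm

theorem mul_left (h : IsRatioBound E Y a b) (k : ℕ) : IsRatioBound E Y (k * a) (k * b) := by
  rw [IsRatioBound, mul_nsmul', mul_nsmul', ← smul_neg]
  exact ⟨nsmul_le_nsmul_right h.1 k, nsmul_le_nsmul_right h.2 k⟩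

theorem mono (hE : 0 ≤ E) (h : IsRatioBound E Y a b) (ha : a ≤ a') : IsRatioBound E Y a' b :=
  have hE' : a • E ≤ a' • E := nsmul_le_nsmul_left hE ha
  ⟨(neg_le_neg hE').trans h.1, h.2.trans hE'⟩

theorem zero_sup (hE : 0 ≤ E) (h : IsRatioBound E Y a b) : IsRatioBound E (0 ⊔ Y) a b := by
  have haE : 0 ≤ a • E := nsmul_nonneg hE a
  rw [sup_comm, IsRatioBound, nsmul_sup_zero]
  exact ⟨(neg_nonpos.2 haE).trans le_sup_right, sup_le h.2 haE⟩

theorem of_zero_sup (hX : IsRatioBound E (0 ⊔ Y) a b) (hnX : IsRatioBound E (0 ⊔ -Y) a b) :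
    IsRatioBound E Y a b :=
  ⟨neg_le.1 (by simpa using (nsmul_le_nsmul_right le_sup_right b).trans hnX.2),
    (nsmul_le_nsmul_right le_sup_right b).trans hX.2⟩

end IsRatioBound

theorem rval_le_max_rval_zero_sup (h1 : Assumption1 E) (X : F) :
    rval E X ≤ max (rval E (0 ⊔ X)) (rval E (0 ⊔ -X)) := by
  have hE := nonneg_of_assumption1 h1
  by_contra! hlt
  obtain ⟨a₁, b₁, hb₁, hlt₁, h₁⟩ := exists_isRatioBound_of_rval_lt h1 (max_lt_iff.1 hlt).1
  obtain ⟨a₂, b₂, hb₂, hlt₂, h₂⟩ := exists_isRatioBound_of_rval_lt h1 (max_lt_iff.1 hlt).2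
  have h₁' := (h₁.mul_left b₂).mono hE (le_max_left (b₂ * a₁) (b₁ * a₂))
  have h₂' := (h₂.mul_left b₁).mono hE (le_max_right (b₂ * a₁) (b₁ * a₂))
  rw [mul_comm b₂ b₁] at h₁'
  have hX := rval_le (Nat.mul_pos hb₁ hb₂) (h₁'.of_zero_sup h₂')
  rw [natCast_max_div_mul a₁ a₂ hb₁ hb₂] at hX
  exact lt_irrefl _ (hX.trans_lt (max_lt hlt₁ hlt₂))

end CharOneSemifield

open CharOneSemifield

theorem stmt6_general {F : Type*} [CharOneSemifield F] (E : F)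
    (h1 : Assumption1 E) (X : F) :
    rval E X = max (rval E (oplus 0 X)) (rval E (oplus 0 (-X))) := by
  have hE := nonneg_of_assumption1 h1
  refine le_antisymm (rval_le_max_rval_zero_sup h1 X) (max_le ?_ ?_)
  · exact rval_le_rval h1 fun a b h => h.zero_sup hE
  · exact rval_le_rval h1 fun a b h => h.neg.zero_sup hE

/-- in a Banach semi-field, `r(X) = max (r (0 ⊕ X)) (r (0 ⊕ (-X)))`. -/
theorem stmt6 {F : Type*} [CharOneSemifield F] (E : F)
    (h1 : Assumption1 E) (h2 : Assumption2 E) (hB : IsBanach E) (X : F) :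
    rval E X = max (rval E (oplus 0 X)) (rval E (oplus 0 (-X))) :=
  stmt6_general E h1 X
end
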